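/- arXiv:2006.15756 — 8 statements merged into one kernel-verified Lean document; each statement's English description precedes it below -/
import Mathlib

section
/- For all positive reals λ, k, μ, the quantity Δ_WP = 1/λ + 1/k + 1/μ + (1/(λ+μ))(1 + μ/(λ+k)) − (λ+k+μ)/(λk + kμ + λμ) is strictly less than Δ_WOP = 1/λ + 1/k + 2/μ + 1/(λ+k) − (λ+k+μ)/(λk + kμ + λμ). -/
/-! Writing `w = μ / (λ + μ) ∈ (0, 1)`, the preemptive term splits as
`1 / (λ + μ) + w / (λ + k)`; the first summand is below `1 / μ` and the second at most
`1 / (λ + k)`, which is the gap between the two average ages. -/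

lemma one_div_add_mul_one_add_div_lt {a b c : ℝ} (ha : 0 < a) (hb : 0 < b) (hc : 0 ≤ c) :
    1 / (a + b) * (1 + b / c) < 1 / b + 1 / c := by
  have hab : 0 < a + b := add_pos ha hb
  have split : 1 / (a + b) * (1 + b / c) = 1 / (a + b) + b / (a + b) * (1 / c) := by ring
  have first : 1 / (a + b) < 1 / b := one_div_lt_one_div_of_lt hb (lt_add_of_pos_left b ha)
  have second : b / (a + b) * (1 / c) ≤ 1 / c :=
    mul_le_of_le_one_left (one_div_nonneg.mpr hc) (div_le_one_of_le₀ (by linarith) hab.le)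
  linarith

theorem avg_aoi_preemption_lt_no_preemption
    (lam k mu : ℝ) (hlam : 0 < lam) (hk : 0 < k) (hmu : 0 < mu) :
    1/lam + 1/k + 1/mu + (1/(lam+mu)) * (1 + mu/(lam+k))
      - (lam+k+mu)/(lam*k + k*mu + lam*mu)
    < 1/lam + 1/k + 2/mu + 1/(lam+k)
      - (lam+k+mu)/(lam*k + k*mu + lam*mu) := by
  have key := one_div_add_mul_one_add_div_lt hlam hmu (add_pos hlam hk).le
  have two_div : (2 : ℝ) / mu = 1 / mu + 1 / mu := by ring
  linarith
end

section
/- For fixed λ > 0 and μ > 0, the function k ↦ 1/λ + 1/k + 2/μ + 1/(λ+k) − (λ+k+μ)/(λk + kμ + λμ) is strictly decreasing on (0,∞); specifically its derivative equals −1/(λ+k)² − λμ(k² + 2kμ + 2λk + λμ)/(k²(λk + kμ + λμ)²), which is negative for all k > 0. -/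
noncomputable def avgAoIWop (lam mu k : ℝ) : ℝ :=
  1/lam + 1/k + 2/mu + 1/(lam+k) - (lam+k+mu)/(lam*k + k*mu + lam*mu)

noncomputable def avgAoIWopDeriv (lam mu k : ℝ) : ℝ :=
  -(1/(lam+k)^2)
    - lam*mu*(k^2 + 2*k*mu + 2*lam*k + lam*mu) / (k^2 * (lam*k + k*mu + lam*mu)^2)

theorem hasDerivAt_one_div_add_const (lam : ℝ) {k : ℝ} (hk : lam + k ≠ 0) :
    HasDerivAt (fun k : ℝ => 1/(lam+k)) (-(1/(lam+k)^2)) k := by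
  simpa [one_div] using (hasDerivAt_inv hk).comp_const_add lam k

theorem hasDerivAt_esymm_one_div_esymm_two (lam mu : ℝ) {k : ℝ} (hD : lam*k + k*mu + lam*mu ≠ 0) :
    HasDerivAt (fun k : ℝ => (lam+k+mu)/(lam*k + k*mu + lam*mu))
      (-(lam^2 + lam*mu + mu^2) / (lam*k + k*mu + lam*mu)^2) k := by
  have hN : HasDerivAt (fun k : ℝ => lam+k+mu) 1 k :=
    ((hasDerivAt_id k).const_add lam).add_const mu
  have hD' : HasDerivAt (fun k : ℝ => lam*k + k*mu + lam*mu) (lam + mu) k := by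
    simpa using
      (((hasDerivAt_id k).const_mul lam).add ((hasDerivAt_id k).mul_const mu)).add_const (lam*mu)
  exact (hN.div hD' hD).congr_deriv (by ring)

/- The derivative `-1/k²` of `1/k` and the derivative of the last term combine, over the common
denominator `k² D²` with `D = λk + kμ + λμ`, because `k²(λ² + λμ + μ²) - D² = -λμ(k² + 2kμ + 2λk + λμ)`. -/
theorem hasDerivAt_avgAoIWop (lam mu : ℝ) {k : ℝ} (hk : k ≠ 0) (hlk : lam + k ≠ 0)
    (hD : lam*k + k*mu + lam*mu ≠ 0) :
    HasDerivAt (avgAoIWop lam mu) (avgAoIWopDeriv lam mu k) k := by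
  have h_inv : HasDerivAt (fun k : ℝ => 1/k) (-(1/k^2)) k := by
    simpa using hasDerivAt_inv hk
  refine (((((hasDerivAt_const k (1/lam)).add h_inv).add (hasDerivAt_const k (2/mu))).add
    (hasDerivAt_one_div_add_const lam hlk)).sub
    (hasDerivAt_esymm_one_div_esymm_two lam mu hD)).congr_deriv ?_
  unfold avgAoIWopDeriv
  -- keep `D` atomic: `field_simp` would otherwise rewrite it into a form `hD` no longer matches
  set D := lam*k + k*mu + lam*mu with hD_def
  field_simp
  rw [hD_def]
  ring

theorem avgAoIWopDeriv_neg {lam mu k : ℝ} (hlam : 0 ≤ lam) (hmu : 0 ≤ mu) (hk : 0 < k) :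
    avgAoIWopDeriv lam mu k < 0 := by
  have h₁ : 0 < 1/(lam+k)^2 := by positivity
  have h₂ : 0 ≤ lam*mu*(k^2 + 2*k*mu + 2*lam*k + lam*mu) / (k^2 * (lam*k + k*mu + lam*mu)^2) := by
    positivity
  unfold avgAoIWopDeriv
  linarith

theorem avg_aoi_wop_strict_anti
    (lam mu : ℝ) (hlam : 0 < lam) (hmu : 0 < mu) :
    StrictAntiOn
      (fun k : ℝ => 1/lam + 1/k + 2/mu + 1/(lam+k)
        - (lam+k+mu)/(lam*k + k*mu + lam*mu)) (Set.Ioi 0)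
    ∧ ∀ k : ℝ, 0 < k →
      HasDerivAt
        (fun k : ℝ => 1/lam + 1/k + 2/mu + 1/(lam+k)
          - (lam+k+mu)/(lam*k + k*mu + lam*mu))
        (-(1/(lam+k)^2)
          - lam*mu*(k^2 + 2*k*mu + 2*lam*k + lam*mu)
            / (k^2 * (lam*k + k*mu + lam*mu)^2)) k
      ∧ (-(1/(lam+k)^2)
          - lam*mu*(k^2 + 2*k*mu + 2*lam*k + lam*mu)
            / (k^2 * (lam*k + k*mu + lam*mu)^2)) < 0 := by
  have hderiv : ∀ k ∈ Set.Ioi (0 : ℝ), HasDerivAt (avgAoIWop lam mu) (avgAoIWopDeriv lam mu k) k :=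
    fun k (hk : 0 < k) => hasDerivAt_avgAoIWop lam mu hk.ne' (by positivity) (by positivity)
  have hneg : ∀ k ∈ Set.Ioi (0 : ℝ), avgAoIWopDeriv lam mu k < 0 :=
    fun k hk => avgAoIWopDeriv_neg hlam.le hmu.le hk
  refine ⟨?_, fun k hk => ⟨hderiv k hk, hneg k hk⟩⟩
  refine strictAntiOn_of_hasDerivWithinAt_neg (f' := avgAoIWopDeriv lam mu) (convex_Ioi 0)
    (fun k hk => (hderiv k hk).continuousAt.continuousWithinAt) ?_ ?_
  all_goals rw [interior_Ioi]
  · exact fun k hk => (hderiv k hk).hasDerivWithinAt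
  · exact hneg
end

section
/- For fixed λ > 0 and μ > 0, the function k ↦ 1/λ + 1/k + 1/μ + (1/(λ+μ))(1 + μ/(λ+k)) − (λ+k+μ)/(λk + kμ + λμ) is strictly decreasing on (0,∞); its derivative equals −μ/((λ+μ)(λ+k)²) − λμ(k² + 2kμ + 2λk + λμ)/(k²(λk + kμ + λμ)²). -/
/-!
Writing `D = λk + kμ + λμ = k(λ + μ) + λμ`, the last term differentiates to
`-(λ² + λμ + μ²) / D²`, and `D² - k²(λ² + λμ + μ²) = λμ(k² + 2kμ + 2λk + λμ)`.
So the derivative is a sum of two negative terms for `λ, μ, k > 0`, and the function is strictly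
decreasing on `(0, ∞)` by the mean value theorem.
-/

noncomputable section

namespace AvgAoIWP

def avgAoI (lam mu k : ℝ) : ℝ :=
  1/lam + 1/k + 1/mu + (1/(lam+mu)) * (1 + mu/(lam+k)) - (lam+k+mu)/(lam*k + k*mu + lam*mu)

def avgAoIDeriv (lam mu k : ℝ) : ℝ :=
  -(mu/((lam+mu)*(lam+k)^2))
    - lam*mu*(k^2 + 2*k*mu + 2*lam*k + lam*mu) / (k^2 * (lam*k + k*mu + lam*mu)^2)

variable {lam mu k : ℝ}

theorem hasDerivAt_avgAoI (hk : k ≠ 0) (hlk : lam + k ≠ 0) (hlm : lam + mu ≠ 0)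
    (hD : lam*k + k*mu + lam*mu ≠ 0) :
    HasDerivAt (avgAoI lam mu) (avgAoIDeriv lam mu k) k := by
  have hinv : HasDerivAt (fun k : ℝ => 1/k) (-(k^2)⁻¹) k := by
    simpa only [one_div] using hasDerivAt_inv hk
  have hdelay := ((hasDerivAt_const k (1:ℝ)).add ((hasDerivAt_const k mu).div
    ((hasDerivAt_const k lam).add (hasDerivAt_id k)) hlk)).const_mul (1/(lam+mu))
  have hfrac := (((hasDerivAt_const k lam).add (hasDerivAt_id k)).add
    (hasDerivAt_const k mu)).div ((((hasDerivAt_const k lam).mul (hasDerivAt_id k)).add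
      ((hasDerivAt_id k).mul (hasDerivAt_const k mu))).add (hasDerivAt_const k (lam*mu))) hD
  refine (((((hasDerivAt_const k (1/lam)).add hinv).add
    (hasDerivAt_const k (1/mu))).add hdelay).sub hfrac).congr_deriv ?_
  -- `field_simp` rewrites the denominator into this factored form
  have hD' : k * (lam + mu) + lam * mu ≠ 0 := by convert hD using 1; ring
  simp only [avgAoIDeriv, Pi.add_apply, Pi.mul_apply, id]
  field_simp
  ring

theorem avgAoIDeriv_neg (hlam : 0 < lam) (hmu : 0 < mu) (hk : 0 < k) :
    avgAoIDeriv lam mu k < 0 := by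
  have hdelay : 0 < mu/((lam+mu)*(lam+k)^2) := by positivity
  have hwait : 0 < lam*mu*(k^2 + 2*k*mu + 2*lam*k + lam*mu)
      / (k^2 * (lam*k + k*mu + lam*mu)^2) := by positivity
  rw [avgAoIDeriv]
  linarith

end AvgAoIWP

open AvgAoIWP in
theorem avg_aoi_wp_strict_anti
    (lam mu : ℝ) (hlam : 0 < lam) (hmu : 0 < mu) :
    StrictAntiOn
      (fun k : ℝ => 1/lam + 1/k + 1/mu + (1/(lam+mu)) * (1 + mu/(lam+k))
        - (lam+k+mu)/(lam*k + k*mu + lam*mu)) (Set.Ioi 0)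
    ∧ ∀ k : ℝ, 0 < k →
      HasDerivAt
        (fun k : ℝ => 1/lam + 1/k + 1/mu + (1/(lam+mu)) * (1 + mu/(lam+k))
          - (lam+k+mu)/(lam*k + k*mu + lam*mu))
        (-(mu/((lam+mu)*(lam+k)^2))
          - lam*mu*(k^2 + 2*k*mu + 2*lam*k + lam*mu)
            / (k^2 * (lam*k + k*mu + lam*mu)^2)) k := by
  have hderiv : ∀ k : ℝ, 0 < k → HasDerivAt (avgAoI lam mu) (avgAoIDeriv lam mu k) k :=
    fun k hk => hasDerivAt_avgAoI hk.ne' (by positivity) (by positivity) (by positivity)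
  refine ⟨?_, hderiv⟩
  refine strictAntiOn_of_hasDerivWithinAt_neg (f' := avgAoIDeriv lam mu) (convex_Ioi 0)
    (fun k hk => (hderiv k hk).continuousAt.continuousWithinAt) ?_ ?_
  all_goals rw [interior_Ioi]
  · exact fun k hk => (hderiv k hk).hasDerivWithinAt
  · exact fun k hk => avgAoIDeriv_neg hlam hmu hk
end
end

section
/- Let λ, μ, γ, w > 0 and set A = w(λ+μ+λγ)+λμ and D = A² − 4λ(λ+μ)γw². Then both roots of w(λ+μ)γx² − Ax + λw = 0 are real, the smaller root x₁ = (A − √D)/(2wγ(λ+μ)) satisfies 0 < x₁ < 1/γ, and the larger root x₂ = (A + √D)/(2wγ(λ+μ)) satisfies x₂ > 1/γ. Consequently the fixed-point equation x = λw(1−γx)/((λ+μ)w(1−γx)+λμ) has a unique solution in (0, 1/γ). -/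
/-!
With `A` as in the statement, the fixed-point equation on `(0, 1/γ)` is equivalent to
`f x = 0` for `f x = w(λ+μ)γ x² - A x + λw`, because the denominator is positive there.
Now `f 0 = λw > 0` while `f (1/γ) = -λμ/γ < 0`. An upward parabola that is negative at `1/γ`
has positive discriminant and `1/γ` lies strictly between its roots; being positive at `0 < 1/γ`,
it has its smaller root in `(0, 1/γ)`, and that root is the only zero left of `1/γ`.
-/

open Real

noncomputable section

namespace Quadratic

def lowerRoot (a b c : ℝ) : ℝ := (-b - √(discrim a b c)) / (2 * a)

def upperRoot (a b c : ℝ) : ℝ := (-b + √(discrim a b c)) / (2 * a)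

variable {a b c p q x : ℝ}

theorem discrim_pos_of_neg (ha : 0 < a) (hq : a * q ^ 2 + b * q + c < 0) :
    0 < discrim a b c := by
  have h : discrim a b c = (2 * a * q + b) ^ 2 - 4 * a * (a * q ^ 2 + b * q + c) := by
    rw [discrim]; ring
  nlinarith [sq_nonneg (2 * a * q + b), mul_neg_of_pos_of_neg ha hq]

theorem eq_mul_sub_lowerRoot_mul_sub_upperRoot (ha : a ≠ 0) (hd : 0 ≤ discrim a b c) (x : ℝ) :
    a * x ^ 2 + b * x + c = a * (x - lowerRoot a b c) * (x - upperRoot a b c) := by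
  have hs : √(discrim a b c) ^ 2 = b ^ 2 - 4 * a * c := sq_sqrt hd
  rw [lowerRoot, upperRoot]
  field_simp
  linear_combination hs

theorem lowerRoot_le_upperRoot (ha : 0 < a) : lowerRoot a b c ≤ upperRoot a b c := by
  rw [lowerRoot, upperRoot]
  gcongr
  linarith [sqrt_nonneg (discrim a b c)]

theorem eq_zero_iff_eq_root (ha : a ≠ 0) (hd : 0 ≤ discrim a b c) :
    a * x ^ 2 + b * x + c = 0 ↔ x = lowerRoot a b c ∨ x = upperRoot a b c := by
  rw [eq_mul_sub_lowerRoot_mul_sub_upperRoot ha hd]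
  simp only [mul_eq_zero, ha, false_or, sub_eq_zero]

section NegativeValue

variable (ha : 0 < a) (hq : a * q ^ 2 + b * q + c < 0)
include ha hq

theorem mem_Ioo_lowerRoot_upperRoot_of_neg :
    q ∈ Set.Ioo (lowerRoot a b c) (upperRoot a b c) := by
  have hd := (discrim_pos_of_neg ha hq).le
  rw [eq_mul_sub_lowerRoot_mul_sub_upperRoot ha.ne' hd, mul_assoc] at hq
  have hle := lowerRoot_le_upperRoot (b := b) (c := c) ha
  rcases mul_neg_iff.mp (neg_of_mul_neg_right hq ha.le) with ⟨h1, h2⟩ | ⟨h1, h2⟩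
  · exact ⟨by linarith, by linarith⟩
  · linarith

theorem lt_lowerRoot_of_pos_of_neg (hpq : p < q) (hp : 0 < a * p ^ 2 + b * p + c) :
    p < lowerRoot a b c := by
  have hd := (discrim_pos_of_neg ha hq).le
  have hpu : p < upperRoot a b c := hpq.trans (mem_Ioo_lowerRoot_upperRoot_of_neg ha hq).2
  rw [eq_mul_sub_lowerRoot_mul_sub_upperRoot ha.ne' hd, mul_assoc] at hp
  have hprod := pos_of_mul_pos_right hp ha.le
  nlinarith

theorem eq_zero_iff_eq_lowerRoot_of_lt (hx : x < q) :
    a * x ^ 2 + b * x + c = 0 ↔ x = lowerRoot a b c := by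
  rw [eq_zero_iff_eq_root ha.ne' (discrim_pos_of_neg ha hq).le]
  have hqu := (mem_Ioo_lowerRoot_upperRoot_of_neg ha hq).2
  constructor
  · rintro (h | h)
    · exact h
    · linarith
  · exact Or.inl

end NegativeValue

end Quadratic

end

open Quadratic

theorem fixed_point_equation_iff_quadratic_eq_zero {lam mu gam w x : ℝ}
    (hden : (lam+mu)*w*(1-gam*x) + lam*mu ≠ 0) :
    x = lam*w*(1-gam*x) / ((lam+mu)*w*(1-gam*x) + lam*mu) ↔
      w*(lam+mu)*gam*x^2 - (w*(lam+mu+lam*gam) + lam*mu)*x + lam*w = 0 := by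
  rw [eq_div_iff hden]
  constructor <;> intro h <;> linear_combination -h

theorem quadratic_roots_and_unique_fixed_point
    (lam mu gam w : ℝ) (hlam : 0 < lam) (hmu : 0 < mu) (hgam : 0 < gam) (hw : 0 < w) :
    let A := w*(lam+mu+lam*gam) + lam*mu
    let D := A^2 - 4*lam*(lam+mu)*gam*w^2
    let x1 := (A - Real.sqrt D) / (2*w*gam*(lam+mu))
    let x2 := (A + Real.sqrt D) / (2*w*gam*(lam+mu))
    0 ≤ D
    ∧ w*(lam+mu)*gam*x1^2 - A*x1 + lam*w = 0
    ∧ w*(lam+mu)*gam*x2^2 - A*x2 + lam*w = 0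
    ∧ 0 < x1 ∧ x1 < 1/gam ∧ x2 > 1/gam
    ∧ ∃! x : ℝ, x ∈ Set.Ioo 0 (1/gam)
        ∧ x = lam*w*(1-gam*x) / ((lam+mu)*w*(1-gam*x) + lam*mu) := by
  intro A D x1 x2
  set a := w*(lam+mu)*gam
  have ha : 0 < a := by positivity
  have hf (x : ℝ) : w*(lam+mu)*gam*x^2 - A*x + lam*w = a*x^2 + (-A)*x + lam*w := by ring
  have hD : D = discrim a (-A) (lam*w) := by simp only [D, discrim]; ring
  have hx1 : x1 = lowerRoot a (-A) (lam*w) := by simp only [x1, lowerRoot, ← hD]; ring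
  have hx2 : x2 = upperRoot a (-A) (lam*w) := by simp only [x2, upperRoot, ← hD]; ring
  have hq : a*(1/gam)^2 + (-A)*(1/gam) + lam*w < 0 := by
    have hval : a*(1/gam)^2 + (-A)*(1/gam) + lam*w = -(lam*mu/gam) := by field_simp; ring
    rw [hval, neg_neg_iff_pos]; positivity
  have hp : 0 < a*0^2 + (-A)*0 + lam*w := by simpa using mul_pos hlam hw
  have hd := (discrim_pos_of_neg ha hq).le
  have hroots := mem_Ioo_lowerRoot_upperRoot_of_neg ha hq
  have hx1_mem : x1 ∈ Set.Ioo 0 (1/gam) :=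
    hx1 ▸ ⟨lt_lowerRoot_of_pos_of_neg ha hq (by positivity) hp, hroots.1⟩
  have hfixed {x : ℝ} (hx : x ∈ Set.Ioo 0 (1/gam)) :
      x = lam*w*(1-gam*x) / ((lam+mu)*w*(1-gam*x) + lam*mu) ↔ x = x1 := by
    have hγx : 0 < 1 - gam*x := by linarith [(lt_div_iff₀' hgam).mp hx.2]
    rw [fixed_point_equation_iff_quadratic_eq_zero (by positivity), hf,
      eq_zero_iff_eq_lowerRoot_of_lt ha hq hx.2, hx1]
  refine ⟨hD ▸ hd, ?_, ?_, hx1_mem.1, hx1_mem.2, hx2 ▸ hroots.2, x1,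
    ⟨hx1_mem, (hfixed hx1_mem).2 rfl⟩, fun y hy => (hfixed hy.1).1 hy.2⟩
  · rw [hf, eq_zero_iff_eq_root ha.ne' hd, hx1]; exact Or.inl rfl
  · rw [hf, eq_zero_iff_eq_root ha.ne' hd, hx2]; exact Or.inr rfl
end

section
/- Let λ, k, μ > 0. If E[Y] = 1/λ + 1/k + 1/μ, E[Y²] = 2/λ² + 2/k² + 2/μ² + 2/(λμ) + 2/(λk) + 2/(kμ), and E[T] = 1/(λ+k) + 1/μ, then E[T] + E[Y²]/(2E[Y]) = 1/λ + 1/k + 2/μ + 1/(λ+k) − (λ+k+μ)/(λk + kμ + λμ). -/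
/-!
With `a, b, c` the mean stage times `1/λ, 1/k, 1/μ`, the second moment is
`E[Y²] = 2 (a² + b² + c² + ab + bc + ca) = 2 ((a + b + c)² - (ab + bc + ca))`, so
`E[Y²] / (2 E[Y]) = E[Y] - (ab + bc + ca) / (a + b + c)`, and the last ratio is
`(λ + k + μ) / (λk + kμ + λμ)` after clearing the denominators `λkμ`.
-/

theorem sq_add_sq_add_sq_add_mul_add_mul_add_mul_div {K : Type*} [Field K] (a b c : K)
    (h : a + b + c ≠ 0) :
    (a ^ 2 + b ^ 2 + c ^ 2 + a * b + b * c + c * a) / (a + b + c)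
      = a + b + c - (a * b + b * c + c * a) / (a + b + c) := by
  field_simp
  ring

theorem inv_mul_inv_add_inv_mul_inv_add_inv_mul_inv_div {K : Type*} [Field K] {x y z : K}
    (hx : x ≠ 0) (hy : y ≠ 0) (hz : z ≠ 0) :
    (x⁻¹ * y⁻¹ + y⁻¹ * z⁻¹ + z⁻¹ * x⁻¹) / (x⁻¹ + y⁻¹ + z⁻¹)
      = (x + y + z) / (x * y + y * z + x * z) := by
  have hxyz : x * y * z ≠ 0 := by simp [hx, hy, hz]
  have hnum : x⁻¹ * y⁻¹ + y⁻¹ * z⁻¹ + z⁻¹ * x⁻¹ = (x + y + z) / (x * y * z) := by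
    field_simp; ring
  have hden : x⁻¹ + y⁻¹ + z⁻¹ = (x * y + y * z + x * z) / (x * y * z) := by
    field_simp; ring
  rw [hnum, hden, div_div_div_cancel_right₀ hxyz]

theorem avg_aoi_wop_formula
    (lam k mu EY EY2 ET : ℝ) (hlam : 0 < lam) (hk : 0 < k) (hmu : 0 < mu)
    (hEY : EY = 1/lam + 1/k + 1/mu)
    (hEY2 : EY2 = 2/lam^2 + 2/k^2 + 2/mu^2 + 2/(lam*mu) + 2/(lam*k) + 2/(k*mu))
    (hET : ET = 1/(lam+k) + 1/mu) :
    ET + EY2/(2*EY)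
      = 1/lam + 1/k + 2/mu + 1/(lam+k) - (lam+k+mu)/(lam*k + k*mu + lam*mu) := by
  have hEY' : EY = lam⁻¹ + k⁻¹ + mu⁻¹ := by simp only [hEY, one_div]
  have hEY2' : EY2 = 2 * ((lam⁻¹) ^ 2 + (k⁻¹) ^ 2 + (mu⁻¹) ^ 2
      + lam⁻¹ * k⁻¹ + k⁻¹ * mu⁻¹ + mu⁻¹ * lam⁻¹) := by rw [hEY2]; ring
  have hEY_ne : lam⁻¹ + k⁻¹ + mu⁻¹ ≠ 0 := by positivity
  have hratio : EY2 / (2 * EY) = EY - (lam + k + mu) / (lam * k + k * mu + lam * mu) := by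
    rw [hEY2', hEY', mul_div_mul_left _ _ two_ne_zero,
      sq_add_sq_add_sq_add_mul_add_mul_add_mul_div _ _ _ hEY_ne,
      inv_mul_inv_add_inv_mul_inv_add_inv_mul_inv_div hlam.ne' hk.ne' hmu.ne']
  rw [hratio, hET, hEY]
  ring
end

section
/- Let λ, k, μ > 0. If E[Y] = 1/λ + 1/k + 1/μ, E[Y²] = 2/λ² + 2/k² + 2/μ² + 2/(λμ) + 2/(λk) + 2/(kμ), and E[T] = (1/(λ+μ))(1 + μ/(λ+k)), then E[T] + E[Y²]/(2E[Y]) = 1/λ + 1/k + 1/μ + (1/(λ+μ))(1 + μ/(λ+k)) − (λ+k+μ)/(λk + kμ + λμ). -/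
/-! `Y` is the sum of three independent exponential phases with rates `λ, k, μ`, so
`E[Y²] = 2 E[Y]² - 2 (λ + k + μ)/(λ k μ)` while `E[Y] = (λ k + k μ + λ μ)/(λ k μ)`;
dividing gives `E[Y²]/(2 E[Y]) = E[Y] - (λ + k + μ)/(λ k + k μ + λ μ)`. -/

theorem hypoexp_second_moment_div_two_mean {K : Type*} [Field K] {a b c : K} (h2 : (2 : K) ≠ 0)
    (ha : a ≠ 0) (hb : b ≠ 0) (hc : c ≠ 0) (hs : a*b + b*c + a*c ≠ 0) :
    (2/a^2 + 2/b^2 + 2/c^2 + 2/(a*c) + 2/(a*b) + 2/(b*c)) / (2*(1/a + 1/b + 1/c))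
      = 1/a + 1/b + 1/c - (a+b+c)/(a*b + b*c + a*c) := by
  have habc : a*b*c ≠ 0 := by simp [ha, hb, hc]
  have hmean : 1/a + 1/b + 1/c = (a*b + b*c + a*c) / (a*b*c) := by
    field_simp
    ring
  have hsecond : 2/a^2 + 2/b^2 + 2/c^2 + 2/(a*c) + 2/(a*b) + 2/(b*c)
      = 2 * (1/a + 1/b + 1/c)^2 - 2 * ((a+b+c)/(a*b*c)) := by
    field_simp
    ring
  have hquot : (a+b+c)/(a*b + b*c + a*c) = ((a+b+c)/(a*b*c)) / (1/a + 1/b + 1/c) := by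
    rw [hmean, div_div_div_cancel_right₀ habc]
  have hmean_ne : 1/a + 1/b + 1/c ≠ 0 := hmean ▸ div_ne_zero hs habc
  rw [hsecond, hquot]
  field_simp

theorem avg_aoi_wp_formula
    (lam k mu EY EY2 ET : ℝ) (hlam : 0 < lam) (hk : 0 < k) (hmu : 0 < mu)
    (hEY : EY = 1/lam + 1/k + 1/mu)
    (hEY2 : EY2 = 2/lam^2 + 2/k^2 + 2/mu^2 + 2/(lam*mu) + 2/(lam*k) + 2/(k*mu))
    (hET : ET = (1/(lam+mu)) * (1 + mu/(lam+k))) :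
    ET + EY2/(2*EY)
      = 1/lam + 1/k + 1/mu + (1/(lam+mu)) * (1 + mu/(lam+k))
        - (lam+k+mu)/(lam*k + k*mu + lam*mu) := by
  subst hEY hEY2 hET
  rw [hypoexp_second_moment_div_two_mean two_ne_zero hlam.ne' hk.ne' hmu.ne' (by positivity)]
  ring
end

section
/- Let λ, μ, γ, w > 0 and let θ(w) = γ x_S(w) where x_S(w) ∈ (0, 1/γ) solves x = λw(1−γx)/((λ+μ)w(1−γx)+λμ). Then θ is differentiable in w with dθ/dw = γλ²μ(1−θ)/(((λ+μ)w(1−θ) + λμ)² + γλ²μ w), which is strictly positive and bounded above by γ/μ. -/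
/-!
Clearing the denominator `D = (λ+μ)w(1-γx) + λμ`, `x = x_S(w)` is a root of `A x² - B x + C`
with `A = (λ+μ)γw`, `B = (λ+μ+λγ)w + λμ`, `C = λw`, and always the smaller one:
`(λ - (λ+μ)x) D = λ²μ` forces `λ > (λ+μ)x`, whence `B - 2Ax = D + γw(λ - (λ+μ)x) > 0`.
The root formula therefore makes `x_S` differentiable, and implicit differentiation gives
`x_S' = λμx / (w (B - 2Ax))`, which the fixed-point equation turns into the closed form in `θ`.
-/

open Filter Topology

theorem eq_neg_sub_sqrt_discrim_div_of_quadratic_eq_zero {a b c x : ℝ} (ha : a ≠ 0)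
    (hq : a * (x * x) + b * x + c = 0) (hx : 2 * a * x + b ≤ 0) :
    x = (-b - √(discrim a b c)) / (2 * a) := by
  rw [discrim_eq_sq_of_quadratic_eq_zero hq, Real.sqrt_sq_eq_abs, abs_of_nonpos hx]
  field_simp
  ring

theorem hasDerivAt_of_eventually_quadratic_eq_zero {a b c f : ℝ → ℝ} {a' b' c' w : ℝ}
    (ha : HasDerivAt a a' w) (hb : HasDerivAt b b' w) (hc : HasDerivAt c c' w)
    (ha0 : ∀ᶠ v in 𝓝 w, a v ≠ 0) (hbranch : ∀ᶠ v in 𝓝 w, 2 * a v * f v + b v < 0)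
    (hroot : ∀ᶠ v in 𝓝 w, a v * (f v * f v) + b v * f v + c v = 0) :
    HasDerivAt f (-(a' * (f w * f w) + b' * f w + c') / (2 * a w * f w + b w)) w := by
  have hformula :
      (fun v => (-b v - √(discrim (a v) (b v) (c v))) / (2 * a v)) =ᶠ[𝓝 w] f := by
    filter_upwards [ha0, hbranch, hroot] with v hav hbv hrv
    exact (eq_neg_sub_sqrt_discrim_div_of_quadratic_eq_zero hav hrv hbv.le).symm
  have hdiscrim : discrim (a w) (b w) (c w) ≠ 0 := by
    rw [discrim_eq_sq_of_quadratic_eq_zero hroot.self_of_nhds]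
    exact pow_ne_zero 2 hbranch.self_of_nhds.ne
  have hdiff : DifferentiableAt ℝ f w := by
    refine DifferentiableAt.congr_of_eventuallyEq ?_ hformula.symm
    refine (hb.differentiableAt.neg.sub (DifferentiableAt.sqrt ?_ hdiscrim)).div
      (ha.differentiableAt.const_mul 2) (mul_ne_zero two_ne_zero ha0.self_of_nhds)
    exact (hb.differentiableAt.pow 2).sub
      ((ha.differentiableAt.const_mul 4).mul hc.differentiableAt)
  have hf := hdiff.hasDerivAt
  have hzero : HasDerivAt (fun v => a v * (f v * f v) + b v * f v + c v) 0 w :=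
    (hasDerivAt_const w 0).congr_of_eventuallyEq hroot
  have himplicit := ((ha.mul (hf.mul hf)).add (hb.mul hf)).add hc |>.unique hzero
  refine hf.congr_deriv ?_
  rw [eq_div_iff hbranch.self_of_nhds.ne]
  simp only [Pi.mul_apply] at himplicit
  linear_combination himplicit

section BusyFraction

variable {lam mu gam w x θ : ℝ}

theorem busy_denom_pos (hlam : 0 < lam) (hmu : 0 < mu) (hw : 0 ≤ w) (hθ : θ ≤ 1) :
    0 < (lam + mu) * w * (1 - θ) + lam * mu := by
  have := sub_nonneg.mpr hθ
  positivity

theorem busy_fixedPoint_cleared (hlam : 0 < lam) (hmu : 0 < mu) (hw : 0 ≤ w) (hx : gam * x < 1)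
    (hfix : x = lam * w * (1 - gam * x) / ((lam + mu) * w * (1 - gam * x) + lam * mu)) :
    x * ((lam + mu) * w * (1 - gam * x) + lam * mu) = lam * w * (1 - gam * x) :=
  (eq_div_iff (busy_denom_pos hlam hmu hw hx.le).ne').mp hfix

theorem busy_fixedPoint_quadratic (hlam : 0 < lam) (hmu : 0 < mu) (hgam : 0 ≤ gam) (hw : 0 < w)
    (hx : gam * x < 1)
    (hfix : x = lam * w * (1 - gam * x) / ((lam + mu) * w * (1 - gam * x) + lam * mu)) :
    (lam + mu) * gam * w * (x * x) + -((lam + mu + lam * gam) * w + lam * mu) * x + lam * w = 0 ∧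
      2 * ((lam + mu) * gam * w) * x + -((lam + mu + lam * gam) * w + lam * mu) < 0 := by
  have hD := busy_denom_pos hlam hmu hw.le hx.le
  have hcleared := busy_fixedPoint_cleared hlam hmu hw.le hx hfix
  have hgap : 0 < lam - (lam + mu) * x := by
    have : (lam - (lam + mu) * x) * ((lam + mu) * w * (1 - gam * x) + lam * mu) = lam ^ 2 * mu := by
      linear_combination -(lam + mu) * hcleared
    exact pos_of_mul_pos_left (this ▸ by positivity) hD.le
  constructor
  · linear_combination -hcleared
  · nlinarith [mul_nonneg (mul_nonneg hgam hw.le) hgap.le]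

theorem busy_derivative_eq (hlam : 0 < lam) (hmu : 0 < mu) (hgam : 0 ≤ gam) (hw : 0 < w)
    (hx : gam * x < 1)
    (hfix : x = lam * w * (1 - gam * x) / ((lam + mu) * w * (1 - gam * x) + lam * mu)) :
    gam * (-((lam + mu) * gam * (x * x) + -(lam + mu + lam * gam) * x + lam)
        / (2 * ((lam + mu) * gam * w) * x + -((lam + mu + lam * gam) * w + lam * mu)))
      = gam * lam ^ 2 * mu * (1 - gam * x)
        / (((lam + mu) * w * (1 - gam * x) + lam * mu) ^ 2 + gam * lam ^ 2 * mu * w) := by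
  have hbranch := (busy_fixedPoint_quadratic hlam hmu hgam hw hx hfix).2
  have hcleared := busy_fixedPoint_cleared hlam hmu hw.le hx hfix
  have hQ : 0 < ((lam + mu) * w * (1 - gam * x) + lam * mu) ^ 2 + gam * lam ^ 2 * mu * w := by
    have := busy_denom_pos hlam hmu hw.le hx.le
    positivity
  rw [mul_div_assoc', div_eq_div_iff hbranch.ne hQ.ne']
  refine mul_left_cancel₀ hw.ne' ?_
  linear_combination (gam * (lam + mu) * (1 - gam * x) * w
    * ((lam + mu) * w * (1 - gam * x) + lam * mu)) * hcleared

theorem busy_derivative_pos (hlam : 0 < lam) (hmu : 0 < mu) (hgam : 0 < gam) (hw : 0 < w)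
    (hθ : θ < 1) :
    0 < gam * lam ^ 2 * mu * (1 - θ)
      / (((lam + mu) * w * (1 - θ) + lam * mu) ^ 2 + gam * lam ^ 2 * mu * w) := by
  have := sub_pos.mpr hθ
  positivity

theorem busy_derivative_le (hlam : 0 < lam) (hmu : 0 < mu) (hgam : 0 < gam) (hw : 0 < w)
    (hθ₀ : 0 ≤ θ) (hθ : θ < 1) :
    gam * lam ^ 2 * mu * (1 - θ)
      / (((lam + mu) * w * (1 - θ) + lam * mu) ^ 2 + gam * lam ^ 2 * mu * w) ≤ gam / mu := by
  have hD : lam * mu ≤ (lam + mu) * w * (1 - θ) + lam * mu := by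
    have := sub_nonneg.mpr hθ.le
    linarith [show 0 ≤ (lam + mu) * w * (1 - θ) by positivity]
  calc gam * lam ^ 2 * mu * (1 - θ)
        / (((lam + mu) * w * (1 - θ) + lam * mu) ^ 2 + gam * lam ^ 2 * mu * w)
      ≤ gam * lam ^ 2 * mu / (lam * mu) ^ 2 := by
        refine div_le_div₀ (by positivity) ?_ (by positivity) ?_
        · nlinarith [show 0 < gam * lam ^ 2 * mu by positivity]
        · nlinarith [pow_le_pow_left₀ (by positivity) hD 2,
            show 0 < gam * lam ^ 2 * mu * w by positivity]
    _ = gam / mu := by field_simp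

end BusyFraction

theorem busy_fraction_derivative
    (lam mu gam : ℝ) (hlam : 0 < lam) (hmu : 0 < mu) (hgam : 0 < gam)
    (xS : ℝ → ℝ)
    (hxS : ∀ w : ℝ, 0 < w → xS w ∈ Set.Ioo 0 (1/gam)
      ∧ xS w = lam*w*(1-gam*(xS w)) / ((lam+mu)*w*(1-gam*(xS w)) + lam*mu)) :
    ∀ w : ℝ, 0 < w →
      HasDerivAt (fun v => gam * xS v)
        (gam*lam^2*mu*(1 - gam*(xS w))
          / (((lam+mu)*w*(1 - gam*(xS w)) + lam*mu)^2 + gam*lam^2*mu*w)) w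
      ∧ 0 < gam*lam^2*mu*(1 - gam*(xS w))
          / (((lam+mu)*w*(1 - gam*(xS w)) + lam*mu)^2 + gam*lam^2*mu*w)
      ∧ gam*lam^2*mu*(1 - gam*(xS w))
          / (((lam+mu)*w*(1 - gam*(xS w)) + lam*mu)^2 + gam*lam^2*mu*w) ≤ gam/mu := by
  have hθ : ∀ v, 0 < v → 0 < xS v ∧ gam * xS v < 1 := fun v hv =>
    ⟨(hxS v hv).1.1, by simpa using (lt_div_iff₀' hgam).mp (hxS v hv).1.2⟩
  intro w hw
  have hroot : ∀ᶠ v in 𝓝 w, (lam + mu) * gam * v ≠ 0 ∧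
      2 * ((lam + mu) * gam * v) * xS v + -((lam + mu + lam * gam) * v + lam * mu) < 0 ∧
      (lam + mu) * gam * v * (xS v * xS v) + -((lam + mu + lam * gam) * v + lam * mu) * xS v
        + lam * v = 0 := by
    filter_upwards [Ioi_mem_nhds hw] with v (hv : 0 < v)
    obtain ⟨hquad, hbranch⟩ :=
      busy_fixedPoint_quadratic hlam hmu hgam.le hv (hθ v hv).2 (hxS v hv).2
    exact ⟨by positivity, hbranch, hquad⟩
  have hderiv := hasDerivAt_of_eventually_quadratic_eq_zero (hasDerivAt_const_mul _)
    ((hasDerivAt_const_mul (lam + mu + lam * gam)).add_const (lam * mu)).neg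
    (hasDerivAt_const_mul lam) (hroot.mono fun _ h => h.1) (hroot.mono fun _ h => h.2.1)
    (hroot.mono fun _ h => h.2.2)
  exact ⟨(hderiv.const_mul gam).congr_deriv
      (busy_derivative_eq hlam hmu hgam.le hw (hθ w hw).2 (hxS w hw).2),
    busy_derivative_pos hlam hmu hgam hw (hθ w hw).2,
    busy_derivative_le hlam hmu hgam hw (mul_pos hgam (hθ w hw).1).le (hθ w hw).2⟩
end

section
/- Let λ, μ, γ, w > 0 and let x* = (x_I*, x_W*, x_S*) be the equilibrium of the ODE system ẋ_I = −λx_I + μx_S, ẋ_W = λx_I − w(1−γx_S)x_W, ẋ_S = w(1−γx_S)x_W − μx_S with x_I + x_W + x_S = 1 and γx_S* < 1. Consider the linearized system q̇_I = −λq_I + μq_S, q̇_W = λq_I − w(1−γx_S*)q_W + wγx_W* q_S, q̇_S = w(1−γx_S*)q_W − (wγx_W* + μ)q_S restricted to the subspace q_I + q_W + q_S = 0. Then V(q) = |q_I| + |q_W| + |q_S| satisfies V̇ ≤ −δV along trajectories, where δ = min{λ, w(1−γx_S*), wγx_W*} > 0, and hence V(t) ≤ V(0)e^{−δt}. -/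
/-!
The linearized matrix has zero column sums, so for any sign vector `s` of `q` one has
`∑ sᵢ q̇ᵢ = ∑ⱼ ∑_{i≠j} aᵢⱼ (sᵢ - sⱼ) qⱼ` with every summand `≤ 0`; on the zero-sum plane the
summands carrying the rates `λ`, `w(1 - γx_S*)`, `wγx_W*` already add up to at most `-δ V`.
`V` need not be differentiable, but its right derivative always has this signed form, so
Grönwall's inequality for right derivatives gives the exponential bound.
-/

open Set Asymptotics Real

lemma mul_le_abs_of_abs_le_one {s y : ℝ} (hs : |s| ≤ 1) : s * y ≤ |y| :=
  calc s * y ≤ |s| * |y| := (le_abs_self _).trans (abs_mul s y).le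
    _ ≤ |y| := mul_le_of_le_one_left (abs_nonneg y) hs

lemma abs_sign_le_one (x : ℝ) : |(SignType.sign x : ℝ)| ≤ 1 := by
  rcases lt_trichotomy x 0 with h | rfl | h <;> simp [*]

lemma HasDerivWithinAt.abs_Ici_of_eq_zero {f : ℝ → ℝ} {f' x : ℝ}
    (hf : HasDerivWithinAt f f' (Ici x) x) (h0 : f x = 0) :
    HasDerivWithinAt (fun z => |f z|) |f'| (Ici x) x := by
  refine HasDerivWithinAt.of_isLittleO (IsBigO.trans_isLittleO ?_ hf.isLittleO)
  refine IsBigO.of_bound' (eventually_nhdsWithin_of_forall fun z (hz : x ≤ z) => ?_)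
  have hzx : |z - x| = z - x := abs_of_nonneg (sub_nonneg.2 hz)
  simpa only [h0, abs_zero, sub_zero, smul_eq_mul, Real.norm_eq_abs, abs_mul, hzx]
    using abs_abs_sub_abs_le_abs_sub (f z) ((z - x) * f')

/-- At a zero of `f`, `s` is the sign of `f'`. -/
lemma HasDerivWithinAt.exists_abs_Ici {f : ℝ → ℝ} {f' x : ℝ}
    (hf : HasDerivWithinAt f f' (Ici x) x) :
    ∃ s : ℝ, |s| ≤ 1 ∧ s * f x = |f x| ∧
      HasDerivWithinAt (fun z => |f z|) (s * f') (Ici x) x := by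
  by_cases h0 : f x = 0
  · refine ⟨SignType.sign f', abs_sign_le_one f', by simp [h0], ?_⟩
    simpa only [sign_mul_self] using hf.abs_Ici_of_eq_zero h0
  · exact ⟨SignType.sign (f x), abs_sign_le_one _, sign_mul_self _,
      (hasDerivAt_abs h0).comp_hasDerivWithinAt x hf⟩

lemma le_mul_exp_of_hasDerivWithinAt_Ici_le {f f' : ℝ → ℝ} {K a b : ℝ} (hab : a ≤ b)
    (hcont : ContinuousOn f (Icc a b))
    (hf : ∀ x ∈ Ico a b, HasDerivWithinAt f (f' x) (Ici x) x)
    (hle : ∀ x ∈ Ico a b, f' x ≤ K * f x) :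
    f b ≤ f a * exp (K * (b - a)) := by
  have h := le_gronwallBound_of_liminf_deriv_right_le hcont
    (fun x hx _ hr => (hf x hx).liminf_right_slope_le hr) le_rfl
    (fun x hx => (add_zero (K * f x)).symm ▸ hle x hx) b ⟨hab, le_rfl⟩
  rwa [gronwallBound_ε0] at h

/-- Here `β = w(1 - γx_S*)` and `g = wγx_W*`. -/
lemma signed_rate_le {lam mu β g δ a b c sa sb sc : ℝ} (hmu : 0 ≤ mu) (hδ : 0 ≤ δ)
    (hδlam : δ ≤ lam) (hδβ : δ ≤ β) (hδg : δ ≤ g) (hsum : a + b + c = 0)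
    (hsa : |sa| ≤ 1) (hsb : |sb| ≤ 1) (hsc : |sc| ≤ 1)
    (ha : sa * a = |a|) (hb : sb * b = |b|) (hc : sc * c = |c|) :
    sa * (-lam * a + mu * c) + sb * (lam * a - β * b + g * c) + sc * (β * b - (g + mu) * c)
      ≤ -δ * (|a| + |b| + |c|) := by
  -- zero column sums turn each term into a rate times `(sᵢ - sⱼ) qⱼ = sᵢ qⱼ - |qⱼ| ≤ 0`
  have hI : (sb - sa) * a ≤ 0 := by nlinarith [mul_le_abs_of_abs_le_one (y := a) hsb]
  have hW : (sc - sb) * b ≤ 0 := by nlinarith [mul_le_abs_of_abs_le_one (y := b) hsc]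
  have hSI : (sa - sc) * c ≤ 0 := by nlinarith [mul_le_abs_of_abs_le_one (y := c) hsa]
  have hSW : (sb - sc) * c ≤ 0 := by nlinarith [mul_le_abs_of_abs_le_one (y := c) hsb]
  calc _ = lam * ((sb - sa) * a) + β * ((sc - sb) * b) + g * ((sb - sc) * c)
          + mu * ((sa - sc) * c) := by ring
    _ ≤ δ * ((sb - sa) * a) + δ * ((sc - sb) * b) + δ * ((sb - sc) * c) := by
      linarith [mul_le_mul_of_nonpos_right hδlam hI, mul_le_mul_of_nonpos_right hδβ hW,
        mul_le_mul_of_nonpos_right hδg hSW, mul_nonpos_of_nonneg_of_nonpos hmu hSI]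
    _ = δ * ((sc - sb) * b) - δ * (|a| + |b| + |c|) := by
      linear_combination (-δ) * ha - δ * hb - δ * hc + δ * sb * hsum
    _ ≤ -δ * (|a| + |b| + |c|) := by nlinarith [mul_nonpos_of_nonneg_of_nonpos hδ hW]

lemma exists_hasDerivWithinAt_l1_le {lam mu β g δ : ℝ} {qI qW qS : ℝ → ℝ} (hmu : 0 ≤ mu) (hδ : 0 ≤ δ) (hδlam : δ ≤ lam)
    (hδβ : δ ≤ β) (hδg : δ ≤ g)
    (hdI : ∀ t, HasDerivAt qI (-lam * qI t + mu * qS t) t)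
    (hdW : ∀ t, HasDerivAt qW (lam * qI t - β * qW t + g * qS t) t)
    (hdS : ∀ t, HasDerivAt qS (β * qW t - (g + mu) * qS t) t)
    (hzero : ∀ t, qI t + qW t + qS t = 0) (t : ℝ) :
    ∃ d, HasDerivWithinAt (fun t => |qI t| + |qW t| + |qS t|) d (Ici t) t ∧
      d ≤ -δ * (|qI t| + |qW t| + |qS t|) := by
  obtain ⟨sI, hsI, hqI, hI⟩ := (hdI t).hasDerivWithinAt.exists_abs_Ici
  obtain ⟨sW, hsW, hqW, hW⟩ := (hdW t).hasDerivWithinAt.exists_abs_Ici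
  obtain ⟨sS, hsS, hqS, hS⟩ := (hdS t).hasDerivWithinAt.exists_abs_Ici
  exact ⟨_, (hI.add hW).add hS,
    signed_rate_le hmu hδ hδlam hδβ hδg (hzero t) hsI hsW hsS hqI hqW hqS⟩

theorem lyapunov_exponential_decay_general
    (lam mu gam w xW xS : ℝ)
    (hlam : 0 < lam) (hmu : 0 < mu) (hgam : 0 < gam) (hw : 0 < w)
    (hbusy : gam * xS < 1)
    (hxW : 0 < xW)
    (qI qW qS : ℝ → ℝ)
    (hdI : ∀ t : ℝ, HasDerivAt qI (-lam*(qI t) + mu*(qS t)) t)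
    (hdW : ∀ t : ℝ, HasDerivAt qW
      (lam*(qI t) - w*(1-gam*xS)*(qW t) + w*gam*xW*(qS t)) t)
    (hdS : ∀ t : ℝ, HasDerivAt qS
      (w*(1-gam*xS)*(qW t) - (w*gam*xW + mu)*(qS t)) t)
    (hzero : ∀ t : ℝ, qI t + qW t + qS t = 0) :
    let V : ℝ → ℝ := fun t => |qI t| + |qW t| + |qS t|
    let delta : ℝ := min lam (min (w*(1-gam*xS)) (w*gam*xW))
    0 < delta
    ∧ (∀ t : ℝ, ∀ d : ℝ, HasDerivAt V d t → d ≤ -delta * V t)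
    ∧ (∀ t : ℝ, 0 ≤ t → V t ≤ V 0 * Real.exp (-delta * t)) := by
  intro V delta
  have hdelta : 0 < delta :=
    lt_min hlam (lt_min (mul_pos hw (by linarith)) (mul_pos (mul_pos hw hgam) hxW))
  choose V' hV' hV'le using exists_hasDerivWithinAt_l1_le hmu.le hdelta.le (min_le_left _ _)
    ((min_le_right _ _).trans (min_le_left _ _)) ((min_le_right _ _).trans (min_le_right _ _))
    hdI hdW hdS hzero
  have hcont : Continuous V := by
    have hc : ∀ {q : ℝ → ℝ} {q' : ℝ → ℝ}, (∀ t, HasDerivAt q (q' t) t) → Continuous q :=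
      fun h => continuous_iff_continuousAt.2 fun t => (h t).continuousAt
    exact ((hc hdI).abs.add (hc hdW).abs).add (hc hdS).abs
  refine ⟨hdelta, fun t d hd => ?_, fun t ht => ?_⟩
  · rw [(uniqueDiffWithinAt_Ici t).eq_deriv _ hd.hasDerivWithinAt (hV' t)]
    exact hV'le t
  · simpa using le_mul_exp_of_hasDerivWithinAt_Ici_le ht hcont.continuousOn
      (fun x _ => hV' x) (fun x _ => hV'le x)

theorem lyapunov_exponential_decay
    (lam mu gam w xI xW xS : ℝ)
    (hlam : 0 < lam) (hmu : 0 < mu) (hgam : 0 < gam) (hw : 0 < w)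
    (hsum : xI + xW + xS = 1) (hbusy : gam * xS < 1)
    (heqI : -lam*xI + mu*xS = 0)
    (heqW : lam*xI - w*(1-gam*xS)*xW = 0)
    (heqS : w*(1-gam*xS)*xW - mu*xS = 0)
    (hxW : 0 < xW)
    (qI qW qS : ℝ → ℝ)
    (hdI : ∀ t : ℝ, HasDerivAt qI (-lam*(qI t) + mu*(qS t)) t)
    (hdW : ∀ t : ℝ, HasDerivAt qW
      (lam*(qI t) - w*(1-gam*xS)*(qW t) + w*gam*xW*(qS t)) t)
    (hdS : ∀ t : ℝ, HasDerivAt qS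
      (w*(1-gam*xS)*(qW t) - (w*gam*xW + mu)*(qS t)) t)
    (hzero : ∀ t : ℝ, qI t + qW t + qS t = 0) :
    let V : ℝ → ℝ := fun t => |qI t| + |qW t| + |qS t|
    let delta : ℝ := min lam (min (w*(1-gam*xS)) (w*gam*xW))
    0 < delta
    ∧ (∀ t : ℝ, ∀ d : ℝ, HasDerivAt V d t → d ≤ -delta * V t)
    ∧ (∀ t : ℝ, 0 ≤ t → V t ≤ V 0 * Real.exp (-delta * t)) :=
  lyapunov_exponential_decay_general lam mu gam w xW xS hlam hmu hgam hw hbusy hxW qI qW qS hdI hdW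
    hdS hzero
end
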